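/- Symmetric monotone improvement fails without binarity: in the 4-agent instance with symmetric values h_a(b)=4, h_a(c)=1, h_a(d)=2, h_b(c)=2, h_b(d)=1, h_c(d)=4, and room values v_a(r1)=1, v_a(r2)=4, v_b(r1)=4, v_b(r2)=1, v_c(r1)=4, v_c(r2)=1, v_d(r1)=1, v_d(r2)=4, the pair (a,c) is a 2PS blocking pair of μ = {(a,b,r1),(c,d,r2)}, but swapping a and c strictly decreases social welfare (by 2). -/
import Mathlib


/-- A roommate assignment: each agent has a roommate (`mate`) and a room (`room`);
roommates share a room and each room hosts exactly one pair. -/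
structure Assignment (A R : Type*) where
  mate : A → A
  room : A → R
  mate_ne_self : ∀ i, mate i ≠ i
  mate_invol : ∀ i, mate (mate i) = i
  room_mate : ∀ i, room (mate i) = room i
  room_eq_iff : ∀ i j, room i = room j ↔ (j = i ∨ j = mate i)

variable {A R : Type*}

/-- Utility of agent `i` in assignment `μ`: happiness for the roommate plus value of the room. -/
def util (h : A → A → ℝ) (v : A → R → ℝ) (μ : Assignment A R) (i : A) : ℝ :=
  h i (μ.mate i) + v i (μ.room i)

/-- `(i,j)` is a 2-person-stable blocking pair: they live in different rooms and both would
strictly gain by swapping places. -/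
def blocking2PS (h : A → A → ℝ) (v : A → R → ℝ) (μ : Assignment A R) (i j : A) : Prop :=
  μ.room i ≠ μ.room j ∧
  h i (μ.mate j) + v i (μ.room j) > h i (μ.mate i) + v i (μ.room i) ∧
  h j (μ.mate i) + v j (μ.room i) > h j (μ.mate j) + v j (μ.room j)

/-- `(i,j)` is a 4-person-stable blocking pair: in addition, both displaced roommates
strictly prefer their new roommate. -/
def blocking4PS (h : A → A → ℝ) (v : A → R → ℝ) (μ : Assignment A R) (i j : A) : Prop :=
  blocking2PS h v μ i j ∧
  h (μ.mate i) j > h (μ.mate i) i ∧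
  h (μ.mate j) i > h (μ.mate j) j

def is2PS (h : A → A → ℝ) (v : A → R → ℝ) (μ : Assignment A R) : Prop :=
  ∀ i j, ¬ blocking2PS h v μ i j

def is4PS (h : A → A → ℝ) (v : A → R → ℝ) (μ : Assignment A R) : Prop :=
  ∀ i j, ¬ blocking4PS h v μ i j

/-- `μ'` Pareto dominates `μ`. -/
def ParetoDom (h : A → A → ℝ) (v : A → R → ℝ) (μ' μ : Assignment A R) : Prop :=
  (∀ i, util h v μ i ≤ util h v μ' i) ∧ ∃ i, util h v μ i < util h v μ' i

def ParetoOpt (h : A → A → ℝ) (v : A → R → ℝ) (μ : Assignment A R) : Prop :=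
  ∀ μ', ¬ ParetoDom h v μ' μ

/-- `μ'` is the result of swapping agents `i` and `j` in `μ`. -/
def IsSwap (μ μ' : Assignment A R) (i j : A) : Prop :=
  μ'.mate i = μ.mate j ∧ μ'.room i = μ.room j ∧
  μ'.mate j = μ.mate i ∧ μ'.room j = μ.room i ∧
  μ'.room (μ.mate i) = μ.room i ∧ μ'.room (μ.mate j) = μ.room j ∧
  ∀ k, k ≠ i → k ≠ j → k ≠ μ.mate i → k ≠ μ.mate j →
    μ'.mate k = μ.mate k ∧ μ'.room k = μ.room k

/-- Social welfare: the sum of all agents' utilities. -/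
noncomputable def SW [Fintype A] (h : A → A → ℝ) (v : A → R → ℝ) (μ : Assignment A R) : ℝ :=
  ∑ i, util h v μ i

/-- Symmetric but non-binary happiness values (agents a,b,c,d = 0,1,2,3). -/
def hEx18 : Fin 4 → Fin 4 → ℝ := ![![0,4,1,2], ![4,0,2,1], ![1,2,0,4], ![2,1,4,0]]

/-- Room values (rooms r1,r2 = 0,1). -/
def vEx18 : Fin 4 → Fin 2 → ℝ := ![![1,4], ![4,1], ![4,1], ![1,4]]

/-- μ = {(a,b,r1),(c,d,r2)}. -/
def μ18 : Assignment (Fin 4) (Fin 2) :=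
  ⟨![1,0,3,2], ![0,0,1,1], by decide, by decide, by decide, by decide⟩

/-- μ' = {(b,c,r1),(a,d,r2)}, the result of swapping a and c. -/
def μ18' : Assignment (Fin 4) (Fin 2) :=
  ⟨![3,2,1,0], ![1,0,0,1], by decide, by decide, by decide, by decide⟩

/-- Monotone welfare improvement fails without binarity: with these symmetric
non-binary valuations, (a,c) is a 2PS blocking pair of μ, yet swapping a and c strictly
decreases social welfare by 2. -/
theorem symmetric_nonbinary_swap_decreases_SW :
    (∀ i j, hEx18 i j = hEx18 j i) ∧
    blocking2PS hEx18 vEx18 μ18 0 2 ∧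
    IsSwap μ18 μ18' 0 2 ∧
    SW hEx18 vEx18 μ18' = SW hEx18 vEx18 μ18 - 2 := by
  refine ⟨by intro i j; fin_cases i <;> fin_cases j <;> norm_num [hEx18], ⟨by decide, ?_, ?_⟩, ⟨rfl, rfl, rfl, rfl, rfl, rfl, by decide⟩, ?_⟩
  · show hEx18 0 (μ18.mate 2) + vEx18 0 (μ18.room 2) > _
    simp [hEx18, vEx18, μ18]; norm_num
  · show hEx18 2 (μ18.mate 0) + vEx18 2 (μ18.room 0) > _
    simp [hEx18, vEx18, μ18]; norm_num
  · simp [SW, util, hEx18, vEx18, μ18, μ18', Fin.sum_univ_four]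
    norm_num
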